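/- Let A ∈ ℝ^{n×n} and k ∈ [1,n]. Let λ_1(S) ≥ λ_2(S) ≥ ⋯ ≥ λ_n(S) denote the eigenvalues of the symmetric matrix S := (A + A^T)/2 in decreasing order. Then the largest eigenvalue of the symmetric matrix (A^{[k]} + (A^{[k]})^T)/2 equals Σ_{i=1}^k λ_i(S); equivalently, the matrix measure μ_2 induced by the Euclidean norm satisfies μ_2(A^{[k]}) = Σ_{i=1}^k λ_i((A + A^T)/2). -/

import Mathlib

open Matrix Set Filter
open scoped ENNReal

noncomputable section

/-- Increasing `k`-element subsets of `Fin n` (row/column index type of compounds). -/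
abbrev IdxK (n k : ℕ) := {s : Finset (Fin n) // s.card = k}

/-- The `k`-th multiplicative compound of a matrix: the matrix of all `k × k` minors,
indexed by `k`-element subsets of row/column indices (ordered increasingly). -/
noncomputable def mulCompound {n m : ℕ} (k : ℕ) (A : Matrix (Fin n) (Fin m) ℝ) :
    Matrix (IdxK n k) (IdxK m k) ℝ := fun κ lam =>
  (Matrix.of fun i j : Fin k =>
    A (κ.1.orderIsoOfFin κ.2 i).1 (lam.1.orderIsoOfFin lam.2 j).1).det

/-- The `k`-th additive compound: derivative at `ε = 0` of `ε ↦ (I + εA)^{(k)}`. -/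
noncomputable def addCompound {n : ℕ} (k : ℕ) (A : Matrix (Fin n) (Fin n) ℝ) :
    Matrix (IdxK n k) (IdxK n k) ℝ := fun κ lam =>
  deriv (fun ε : ℝ => mulCompound k ((1 : Matrix (Fin n) (Fin n) ℝ) + ε • A) κ lam) 0

/-- Wedge product of `k` vectors in `ℝ^n`, as the `k`-th multiplicative compound of the
`n × k` matrix whose columns are the given vectors. -/
noncomputable def wedge {n k : ℕ} (u : Fin k → (Fin n → ℝ)) : IdxK n k → ℝ := fun κ =>
  mulCompound k (Matrix.of fun i j => u j i) κ ⟨Finset.univ, by simp⟩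

/-- `N` is a norm on `ι → ℝ`. -/
structure IsNorm {ι : Type*} [Fintype ι] (N : (ι → ℝ) → ℝ) : Prop where
  nonneg : ∀ x, 0 ≤ N x
  eq_zero_iff : ∀ x, N x = 0 ↔ x = 0
  triangle : ∀ x y, N (x + y) ≤ N x + N y
  homog : ∀ (c : ℝ) (x), N (c • x) = |c| * N x

/-- Operator norm of a matrix induced by the vector norm `N`. -/
noncomputable def inducedNorm {ι : Type*} [Fintype ι] (N : (ι → ℝ) → ℝ)
    (M : Matrix ι ι ℝ) : ℝ :=
  sSup {c : ℝ | ∃ x : ι → ℝ, N x = 1 ∧ c = N (M.mulVec x)}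

/-- Matrix measure (logarithmic norm) induced by the vector norm `N`:
`μ(M) = lim_{ε→0⁺} (‖I + εM‖ - 1)/ε`, i.e. the one-sided derivative at `0`. -/
noncomputable def matMeasure {ι : Type*} [Fintype ι] [DecidableEq ι] (N : (ι → ℝ) → ℝ)
    (M : Matrix ι ι ℝ) : ℝ :=
  derivWithin (fun ε : ℝ => inducedNorm N ((1 : Matrix ι ι ℝ) + ε • M)) (Set.Ici 0) 0

/-- The `L_p` norm on `ι → ℝ` for `p ∈ [1,∞]` (`p = ⊤` is the sup norm). -/
noncomputable def lpnorm {ι : Type*} [Fintype ι] (p : ℝ≥0∞) (x : ι → ℝ) : ℝ :=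
  if p = ⊤ then ⨆ i, |x i| else (∑ i, |x i| ^ p.toReal) ^ (1 / p.toReal)

/-! The `k`-th multiplicative compound is the matrix of `⋀^k A` in the basis of wedges of standard
basis vectors, so `A ↦ A^{(k)}` is multiplicative and commutes with transposition, and by Jacobi's
formula `A ↦ A^{[k]}` is linear. Writing `S = U D Uᵀ` with `U` orthogonal, the symmetric part of
`A^{[k]}` is therefore `S^{[k]} = U^{(k)} D^{[k]} (U^{(k)})ᵀ`, where `U^{(k)}` is again orthogonal
and `D^{[k]}` is diagonal with entries `∑_{i ∈ κ} λ_i` over the `k`-subsets `κ`. These sums are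
the eigenvalues, and the largest of them collects the `k` largest `λ_i`. -/

namespace Matrix

variable {ι : Type*} [Fintype ι] [DecidableEq ι]

def detDeriv {R : Type*} [CommRing R] (P : Matrix ι ι R) : Matrix ι ι R →ₗ[R] R :=
  (detRowAlternating : (ι → R) [⋀^ι]→ₗ[R] R).toMultilinearMap.linearDeriv P

theorem detDeriv_apply {R : Type*} [CommRing R] (P M : Matrix ι ι R) :
    detDeriv P M = ∑ i, (P.updateRow i (M i)).det :=
  MultilinearMap.linearDeriv_apply _ _ _

theorem hasDerivAt_det_add_smul {𝕜 : Type*} [NontriviallyNormedField 𝕜] (P M : Matrix ι ι 𝕜) :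
    HasDerivAt (fun ε : 𝕜 => (P + ε • M).det) (detDeriv P M) 0 := by
  let D : ContinuousMultilinearMap 𝕜 (fun _ : ι => ι → 𝕜) 𝕜 :=
    ⟨(detRowAlternating : (ι → 𝕜) [⋀^ι]→ₗ[𝕜] 𝕜).toMultilinearMap, continuous_id.matrix_det⟩
  -- `Matrix` carries no norm: differentiate the curve in the underlying function space.
  have hline : HasDerivAt (fun ε : 𝕜 => of.symm P + ε • of.symm M) (of.symm M) 0 := by
    simpa using ((hasDerivAt_id' (0 : 𝕜)).smul_const (of.symm M)).const_add (of.symm P)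
  have h := (D.hasFDerivAt _).comp_hasDerivAt (0 : 𝕜) hline
  rw [ContinuousMultilinearMap.linearDeriv_apply, zero_smul, add_zero] at h
  rw [detDeriv_apply]
  exact h

end Matrix

section Compound

variable {n k : ℕ}

theorem mulCompound_apply {m : ℕ} (A : Matrix (Fin n) (Fin m) ℝ) (κ : IdxK n k) (ρ : IdxK m k) :
    mulCompound k A κ ρ = (A.submatrix (κ.1.orderEmbOfFin κ.2) (ρ.1.orderEmbOfFin ρ.2)).det := by
  simp [mulCompound, submatrix]

theorem mulCompound_transpose {m : ℕ} (A : Matrix (Fin n) (Fin m) ℝ) :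
    mulCompound k Aᵀ = (mulCompound k A)ᵀ := by
  ext κ ρ
  rw [transpose_apply, mulCompound_apply, mulCompound_apply, ← det_transpose]
  rfl

theorem mulCompound_diagonal (d : Fin n → ℝ) :
    mulCompound k (diagonal d) = diagonal fun κ : IdxK n k => ∏ i ∈ κ.1, d i := by
  ext κ ρ
  rw [mulCompound_apply]
  by_cases h : κ = ρ
  · subst h
    rw [diagonal_apply_eq, submatrix_diagonal _ _ (κ.1.orderEmbOfFin κ.2).injective, det_diagonal]
    conv_rhs => rw [← κ.1.map_orderEmbOfFin_univ κ.2, Finset.prod_map]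
    rfl
  · rw [diagonal_apply_ne _ h]
    obtain ⟨a, haκ, haρ⟩ : ∃ a ∈ κ.1, a ∉ ρ.1 := Finset.not_subset.mp fun hsub =>
      h (Subtype.ext (Finset.eq_of_subset_of_card_le hsub (by rw [κ.2, ρ.2])))
    obtain ⟨i, rfl⟩ : a ∈ Set.range (κ.1.orderEmbOfFin κ.2) := by
      rwa [Finset.range_orderEmbOfFin]
    exact det_eq_zero_of_row_eq_zero i fun j =>
      diagonal_apply_ne _ fun hij => haρ (hij ▸ Finset.orderEmbOfFin_mem ρ.1 ρ.2 j)

def idxKEquivPowersetCard (n k : ℕ) : IdxK n k ≃ Set.powersetCard (Fin n) k :=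
  Equiv.subtypeEquivRight fun _ => Set.powersetCard.mem_iff.symm

theorem mulCompound_eq_toMatrix_exteriorPower_map (A : Matrix (Fin n) (Fin n) ℝ) :
    mulCompound k A =
      (LinearMap.toMatrix ((Pi.basisFun ℝ (Fin n)).exteriorPower k)
        ((Pi.basisFun ℝ (Fin n)).exteriorPower k) (exteriorPower.map k (toLin' A))).submatrix
        (idxKEquivPowersetCard n k) (idxKEquivPowersetCard n k) := by
  ext κ ρ
  rw [submatrix_apply, LinearMap.toMatrix_apply, exteriorPower.basis_repr_apply,
    exteriorPower.coe_basis, exteriorPower.map_apply_ιMulti_family, exteriorPower.ιMulti_family,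
    exteriorPower.ιMultiDual_apply_ιMulti, mulCompound_apply, ← det_transpose]
  congr 1
  ext i j
  simp [idxKEquivPowersetCard, Set.powersetCard.ofFinEmbEquiv_symm_apply]

theorem mulCompound_mul (A B : Matrix (Fin n) (Fin n) ℝ) :
    mulCompound k (A * B) = mulCompound k A * mulCompound k B := by
  simp only [mulCompound_eq_toMatrix_exteriorPower_map, toLin'_mul, exteriorPower.map_comp,
    LinearMap.toMatrix_comp _ ((Pi.basisFun ℝ (Fin n)).exteriorPower k), submatrix_mul_equiv]

theorem mulCompound_one : mulCompound k (1 : Matrix (Fin n) (Fin n) ℝ) = 1 := by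
  rw [mulCompound_eq_toMatrix_exteriorPower_map, toLin'_one, exteriorPower.map_id,
    LinearMap.toMatrix_id, submatrix_one_equiv]

theorem star_mulCompound (A : Matrix (Fin n) (Fin n) ℝ) :
    star (mulCompound k A) = mulCompound k (star A) := by
  simp [star_eq_conjTranspose, mulCompound_transpose]

theorem mulCompound_mem_unitaryGroup {U : Matrix (Fin n) (Fin n) ℝ}
    (hU : U ∈ unitaryGroup (Fin n) ℝ) : mulCompound k U ∈ unitaryGroup (IdxK n k) ℝ := by
  rw [mem_unitaryGroup_iff, star_mulCompound, ← mulCompound_mul, mem_unitaryGroup_iff.mp hU,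
    mulCompound_one]

theorem hasDerivAt_mulCompound_one_add_smul (A : Matrix (Fin n) (Fin n) ℝ) (κ ρ : IdxK n k) :
    HasDerivAt (fun ε : ℝ => mulCompound k (1 + ε • A) κ ρ)
      (detDeriv ((1 : Matrix (Fin n) (Fin n) ℝ).submatrix (κ.1.orderEmbOfFin κ.2)
        (ρ.1.orderEmbOfFin ρ.2)) (A.submatrix (κ.1.orderEmbOfFin κ.2) (ρ.1.orderEmbOfFin ρ.2)))
      0 := by
  simp only [mulCompound_apply]
  exact hasDerivAt_det_add_smul _ _

theorem addCompound_apply (A : Matrix (Fin n) (Fin n) ℝ) (κ ρ : IdxK n k) :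
    addCompound k A κ ρ =
      detDeriv ((1 : Matrix (Fin n) (Fin n) ℝ).submatrix (κ.1.orderEmbOfFin κ.2)
        (ρ.1.orderEmbOfFin ρ.2)) (A.submatrix (κ.1.orderEmbOfFin κ.2) (ρ.1.orderEmbOfFin ρ.2)) :=
  (hasDerivAt_mulCompound_one_add_smul A κ ρ).deriv

theorem addCompound_add (A B : Matrix (Fin n) (Fin n) ℝ) :
    addCompound k (A + B) = addCompound k A + addCompound k B := by
  ext κ ρ
  simp only [Matrix.add_apply, addCompound_apply, submatrix_add, Pi.add_apply, map_add]

theorem addCompound_smul (c : ℝ) (A : Matrix (Fin n) (Fin n) ℝ) :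
    addCompound k (c • A) = c • addCompound k A := by
  ext κ ρ
  simp only [Matrix.smul_apply, addCompound_apply, submatrix_smul, Pi.smul_apply, map_smul]

theorem addCompound_transpose (A : Matrix (Fin n) (Fin n) ℝ) :
    addCompound k Aᵀ = (addCompound k A)ᵀ := by
  ext κ ρ
  have hcurve : ∀ ε : ℝ, (1 : Matrix (Fin n) (Fin n) ℝ) + ε • Aᵀ = (1 + ε • A)ᵀ := fun ε => by
    rw [transpose_add, transpose_smul, transpose_one]
  simp only [addCompound, transpose_apply, hcurve, mulCompound_transpose]

theorem addCompound_mul_mul {U V : Matrix (Fin n) (Fin n) ℝ} (hUV : U * V = 1)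
    (A : Matrix (Fin n) (Fin n) ℝ) :
    addCompound k (U * A * V) = mulCompound k U * addCompound k A * mulCompound k V := by
  have hcurve : ∀ ε : ℝ, 1 + ε • (U * A * V) = U * (1 + ε • A) * V := fun ε => by
    rw [mul_add, add_mul, mul_one, hUV, mul_smul_comm, smul_mul_assoc]
  ext κ ρ
  have h : HasDerivAt
      (fun ε : ℝ => (mulCompound k U * mulCompound k (1 + ε • A) * mulCompound k V :
        Matrix (IdxK n k) (IdxK n k) ℝ) κ ρ)
      ((mulCompound k U * addCompound k A * mulCompound k V) κ ρ) 0 := by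
    simp only [mul_apply, addCompound_apply]
    exact HasDerivAt.fun_sum fun ν _ => (HasDerivAt.fun_sum fun μ _ =>
      (hasDerivAt_mulCompound_one_add_smul A μ ν).const_mul _).mul_const _
  rw [← h.deriv]
  simp only [addCompound, hcurve, mulCompound_mul]

theorem addCompound_diagonal (d : Fin n → ℝ) :
    addCompound k (diagonal d) = diagonal fun κ : IdxK n k => ∑ i ∈ κ.1, d i := by
  have hcurve : ∀ ε : ℝ, (1 : Matrix (Fin n) (Fin n) ℝ) + ε • diagonal d =
      diagonal fun i => 1 + ε * d i := fun ε => by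
    rw [← diagonal_one, ← diagonal_smul, diagonal_add]; rfl
  ext κ ρ
  simp only [addCompound, hcurve, mulCompound_diagonal]
  by_cases h : κ = ρ
  · subst h
    simp only [diagonal_apply_eq]
    have hprod := HasDerivAt.fun_finsetProd (u := κ.1) fun i _ =>
      ((hasDerivAt_id' (0 : ℝ)).mul_const (d i)).const_add 1
    simpa using hprod.deriv
  · simp [diagonal_apply_ne _ h]

theorem Fin.val_le_of_strictMono {f : Fin k → Fin n} (hf : StrictMono f) (i : Fin k) :
    (i : ℕ) ≤ f i := by
  simpa using Finset.card_le_card_of_injOn f (s := Finset.Iio i) (t := Finset.Iio (f i))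
    (fun j hj => by simpa using hf (by simpa using hj)) hf.injective.injOn

theorem Antitone.sum_le_sum_filter_val_lt {β : Type*} [AddCommMonoid β] [PartialOrder β]
    [IsOrderedAddMonoid β] {f : Fin n → β} (hf : Antitone f) {s : Finset (Fin n)}
    (hs : s.card = k) :
    ∑ i ∈ s, f i ≤ ∑ i ∈ Finset.univ.filter (fun i : Fin n => (i : ℕ) < k), f i := by
  have hkn : k ≤ n := hs ▸ (Finset.card_le_univ s).trans_eq (Fintype.card_fin n)
  have hinit : Finset.univ.filter (fun i : Fin n => (i : ℕ) < k) =
      Finset.univ.map (Fin.castLEEmb hkn) := by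
    ext i
    simp only [Finset.mem_filter, Finset.mem_univ, true_and, Finset.mem_map, Fin.castLEEmb_apply]
    exact ⟨fun h => ⟨⟨i, h⟩, rfl⟩, fun ⟨j, hj⟩ => hj ▸ j.isLt⟩
  rw [hinit, Finset.sum_map, ← s.map_orderEmbOfFin_univ hs, Finset.sum_map]
  exact Finset.sum_le_sum fun i _ =>
    hf (Fin.val_le_of_strictMono (s.orderEmbOfFin hs).strictMono i)

theorem isGreatest_range_sum_comp_equiv {β : Type*} [AddCommMonoid β] [PartialOrder β]
    [IsOrderedAddMonoid β] {f : Fin n → β} (hf : Antitone f) (e : Fin n ≃ Fin n) (hkn : k ≤ n) :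
    IsGreatest (Set.range fun κ : IdxK n k => ∑ i ∈ κ.1, f (e i))
      (∑ i ∈ Finset.univ.filter (fun i : Fin n => (i : ℕ) < k), f i) := by
  refine ⟨⟨⟨(Finset.univ.filter fun i : Fin n => (i : ℕ) < k).map e.symm.toEmbedding,
    by simp [Fin.card_filter_val_lt, hkn]⟩, by simp [Finset.sum_map]⟩, ?_⟩
  rintro _ ⟨κ, rfl⟩
  exact (Finset.sum_map κ.1 e.toEmbedding f).symm.trans_le
    (hf.sum_le_sum_filter_val_lt (by simp [κ.2]))

end Compound

theorem mu2_addCompound_general {n : ℕ} (k : ℕ) (hkn : k ≤ n)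
    (A : Matrix (Fin n) (Fin n) ℝ)
    (S : Matrix (Fin n) (Fin n) ℝ) (hS : S = (2⁻¹ : ℝ) • (A + Aᵀ))
    (hSh : S.IsHermitian)
    (Tm : Matrix (IdxK n k) (IdxK n k) ℝ)
    (hT : Tm = (2⁻¹ : ℝ) • (addCompound k A + (addCompound k A)ᵀ))
    (hTh : Tm.IsHermitian)
    (lam : Fin n → ℝ) (hmono : Antitone lam)
    (e : Fin n ≃ Fin n) (he : ∀ i, lam (e i) = hSh.eigenvalues i) :
    IsGreatest (Set.range hTh.eigenvalues)
      (∑ i ∈ Finset.univ.filter (fun i : Fin n => (i : ℕ) < k), lam i) := by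
  let U : unitaryGroup (Fin n) ℝ := hSh.eigenvectorUnitary
  let W : unitaryGroup (IdxK n k) ℝ := ⟨mulCompound k U, mulCompound_mem_unitaryGroup U.2⟩
  have hS_diag : S = U * diagonal hSh.eigenvalues * star (U : Matrix (Fin n) (Fin n) ℝ) := by
    simpa using hSh.spectral_theorem
  have hT_diag : Tm = W * diagonal (fun κ : IdxK n k => ∑ i ∈ κ.1, hSh.eigenvalues i) *
      star (W : Matrix (IdxK n k) (IdxK n k) ℝ) := by
    rw [hT, ← addCompound_transpose, ← addCompound_add, ← addCompound_smul, ← hS]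
    conv_lhs => rw [hS_diag]
    rw [addCompound_mul_mul (Unitary.mul_star_self_of_mem U.2), addCompound_diagonal,
      star_mulCompound]
  rw [← hTh.spectrum_real_eq_range_eigenvalues, hT_diag, Unitary.spectrum_star_right_conjugate,
    spectrum_diagonal]
  simp only [← he]
  exact isGreatest_range_sum_comp_equiv hmono e hkn

/-- if `λ_1 ≥ ⋯ ≥ λ_n` are the eigenvalues of `S = (A + Aᵀ)/2`
(in decreasing order), then the largest eigenvalue of `(A^{[k]} + (A^{[k]})ᵀ)/2`
equals `Σ_{i=1}^k λ_i`; i.e. `μ₂(A^{[k]}) = Σ_{i=1}^k λ_i((A+Aᵀ)/2)`. -/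
theorem mu2_addCompound {n : ℕ} (k : ℕ) (hk : 1 ≤ k) (hkn : k ≤ n)
    (A : Matrix (Fin n) (Fin n) ℝ)
    (S : Matrix (Fin n) (Fin n) ℝ) (hS : S = (2⁻¹ : ℝ) • (A + Aᵀ))
    (hSh : S.IsHermitian)
    (Tm : Matrix (IdxK n k) (IdxK n k) ℝ)
    (hT : Tm = (2⁻¹ : ℝ) • (addCompound k A + (addCompound k A)ᵀ))
    (hTh : Tm.IsHermitian)
    (lam : Fin n → ℝ) (hmono : Antitone lam)
    (e : Fin n ≃ Fin n) (he : ∀ i, lam (e i) = hSh.eigenvalues i) :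
    IsGreatest (Set.range hTh.eigenvalues)
      (∑ i ∈ Finset.univ.filter (fun i : Fin n => (i : ℕ) < k), lam i) :=
  mu2_addCompound_general k hkn A S hS hSh Tm hT hTh lam hmono e he

end
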